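/- arXiv:1908.02801 — 2 statements merged into one kernel-verified Lean document; each statement's English description precedes it below -/
import Mathlib

section
/- Let d ≥ 2 and let C_d := {v ∈ B_d : v(0) = 1}. If C_d is path-connected, then B_d is path-connected. -/
open scoped ComplexConjugate

/-- The translation operator `T` on `ℂ^d = (ZMod d → ℂ)`: `(T v) j = v (j - 1)`. -/
noncomputable def gT (d : ℕ) : (ZMod d → ℂ) ≃ₗ[ℂ] (ZMod d → ℂ) :=
  LinearEquiv.funCongrLeft ℂ ℂ (Equiv.subRight (1 : ZMod d))

/-- The modulation operator `M` on `ℂ^d`: `(M v) j = ω ^ j * v j` with `ω = exp (2 π i / d)`. -/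
noncomputable def gM (d : ℕ) : (ZMod d → ℂ) ≃ₗ[ℂ] (ZMod d → ℂ) :=
  LinearEquiv.piCongrRight fun j =>
    LinearEquiv.smulOfNeZero ℂ ℂ (Complex.exp (2 * Real.pi * Complex.I / d) ^ j.val)
      (pow_ne_zero _ (Complex.exp_ne_zero _))

/-- The standard inner product on `ℂ^d`, conjugate-linear in the first argument. -/
noncomputable def inn {d : ℕ} [NeZero d] (u w : ZMod d → ℂ) : ℂ :=
  ∑ j : ZMod d, conj (u j) * w j

/-- The Gabor system `G(v) = {M^ℓ T^k v}` is `(α, β)`-biangular: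
`|⟨v, T^k v⟩|² = α` for `k ∈ {1,…,d-1}` and `|⟨v, M^ℓ T^k v⟩|² = β` for
`k ∈ {0,…,d-1}`, `ℓ ∈ {1,…,d-1}`. -/
def Biangular (d : ℕ) [NeZero d] (v : ZMod d → ℂ) (α β : ℝ) : Prop :=
  (∀ k : ℕ, 1 ≤ k → k ≤ d - 1 → ‖inn v ((gT d ^ k) v)‖ ^ 2 = α) ∧
  (∀ k ℓ : ℕ, k ≤ d - 1 → 1 ≤ ℓ → ℓ ≤ d - 1 →
    ‖inn v ((gM d ^ ℓ) ((gT d ^ k) v))‖ ^ 2 = β)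

/-- `B_d`: the set of nonzero `v ∈ ℂ^d` whose Gabor system is biangular. -/
def Bset (d : ℕ) [NeZero d] : Set (ZMod d → ℂ) :=
  {v | v ≠ 0 ∧ ∃ α β : ℝ, Biangular d v α β}

/-!
`B_d` is invariant under nonzero scalings and under the translation `T`, and it contains the
constant vector `1`, which `T` fixes. Given `v ∈ B_d` with `v j ≠ 0`, translating coordinate `j`
to `0` and rescaling gives a point of `C_d`; a path in `C_d` from `1` to that point, transported
back by `T^j`, joins `1` to `(v j)⁻¹ • v` inside `B_d`, and a path from `(v j)⁻¹` to `1` in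
`ℂ \ {0}` rescales `(v j)⁻¹ • v` to `v`.
-/

section Gabor

variable {d : ℕ}

lemma gT_apply (v : ZMod d → ℂ) (j : ZMod d) : gT d v j = v (j - 1) := rfl

lemma gT_pow_apply (k : ℕ) (v : ZMod d → ℂ) (j : ZMod d) :
    (gT d ^ k) v j = v (j - k) := by
  induction k generalizing j with
  | zero => simp
  | succ k ih =>
    rw [pow_succ', LinearEquiv.mul_apply, gT_apply, ih, Nat.cast_succ, sub_sub, add_comm]

lemma gT_pow_gT (k : ℕ) (v : ZMod d → ℂ) : (gT d ^ k) (gT d v) = gT d ((gT d ^ k) v) := by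
  rw [← LinearEquiv.mul_apply, ← pow_succ, pow_succ', LinearEquiv.mul_apply]

lemma isFixedPt_gT_pow_one (k : ℕ) : Function.IsFixedPt (gT d ^ k) 1 :=
  funext fun j => by rw [gT_pow_apply]; rfl

variable [NeZero d]

lemma gM_apply (v : ZMod d → ℂ) (j : ZMod d) : gM d v j = ZMod.stdAddChar j * v j := by
  rw [ZMod.stdAddChar_apply, ZMod.toCircle_apply]
  change Complex.exp _ ^ j.val * v j = _
  rw [← Complex.exp_nat_mul]
  ring_nf

lemma gM_pow_apply (ℓ : ℕ) (v : ZMod d → ℂ) (j : ZMod d) :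
    (gM d ^ ℓ) v j = ZMod.stdAddChar (j * (ℓ : ZMod d)) * v j := by
  induction ℓ generalizing v with
  | zero => simp
  | succ ℓ ih =>
    rw [pow_succ, LinearEquiv.mul_apply, ih, gM_apply, ← mul_assoc, ← AddChar.map_add_eq_mul]
    push_cast
    ring_nf

lemma gM_pow_gT (ℓ : ℕ) (v : ZMod d → ℂ) :
    (gM d ^ ℓ) (gT d v) = ZMod.stdAddChar (ℓ : ZMod d) • gT d ((gM d ^ ℓ) v) := by
  funext j
  rw [Pi.smul_apply, gT_apply, gM_pow_apply, gM_pow_apply, gT_apply, smul_eq_mul, ← mul_assoc,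
    ← AddChar.map_add_eq_mul]
  ring_nf

lemma inn_smul_left (c : ℂ) (u w : ZMod d → ℂ) : inn (c • u) w = conj c * inn u w := by
  simp only [inn, Pi.smul_apply, smul_eq_mul, map_mul, Finset.mul_sum, mul_assoc]

lemma inn_smul_right (c : ℂ) (u w : ZMod d → ℂ) : inn u (c • w) = c * inn u w := by
  simp only [inn, Pi.smul_apply, smul_eq_mul, Finset.mul_sum, mul_left_comm]

lemma norm_inn_smul_smul (c : ℂ) (u w : ZMod d → ℂ) :
    ‖inn (c • u) (c • w)‖ = ‖c‖ ^ 2 * ‖inn u w‖ := by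
  rw [inn_smul_left, inn_smul_right, norm_mul, norm_mul, Complex.norm_conj, ← mul_assoc, sq]

lemma inn_gT_gT (u w : ZMod d → ℂ) : inn (gT d u) (gT d w) = inn u w :=
  Fintype.sum_equiv (Equiv.subRight 1) _ _ fun _ => rfl

lemma gT_pow_val_gT_pow_val_neg (j : ZMod d) (v : ZMod d → ℂ) :
    (gT d ^ j.val) ((gT d ^ (-j).val) v) = v :=
  funext fun i => by simp only [gT_pow_apply, ZMod.natCast_val, ZMod.cast_id', id, sub_neg_eq_add,
    sub_add_cancel]

lemma biangular_smul {v : ZMod d → ℂ} {α β : ℝ} (c : ℂ) (h : Biangular d v α β) :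
    Biangular d (c • v) (‖c‖ ^ 4 * α) (‖c‖ ^ 4 * β) := by
  obtain ⟨hT, hMT⟩ := h
  refine ⟨fun k hk₁ hk₂ => ?_, fun k ℓ hk hℓ₁ hℓ₂ => ?_⟩
  · rw [map_smul, norm_inn_smul_smul, mul_pow, ← hT k hk₁ hk₂]
    ring
  · rw [map_smul, map_smul, norm_inn_smul_smul, mul_pow, ← hMT k ℓ hk hℓ₁ hℓ₂]
    ring

lemma biangular_gT {v : ZMod d → ℂ} {α β : ℝ} (h : Biangular d v α β) :
    Biangular d (gT d v) α β := by
  obtain ⟨hT, hMT⟩ := h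
  refine ⟨fun k hk₁ hk₂ => ?_, fun k ℓ hk hℓ₁ hℓ₂ => ?_⟩
  · rw [gT_pow_gT, inn_gT_gT]
    exact hT k hk₁ hk₂
  · rw [gT_pow_gT, gM_pow_gT, inn_smul_right, norm_mul, ZMod.stdAddChar_apply, Circle.norm_coe,
      one_mul, inn_gT_gT]
    exact hMT k ℓ hk hℓ₁ hℓ₂

/-- `⟨1, M^ℓ T^k 1⟩` is a full character sum, which vanishes as `ℓ ≢ 0 [MOD d]`. -/
lemma biangular_one : Biangular d 1 ((d : ℝ) ^ 2) 0 := by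
  refine ⟨fun k _ _ => ?_, fun k ℓ _ hℓ₁ hℓ₂ => ?_⟩
  · rw [isFixedPt_gT_pow_one]
    simp [inn]
  · have hℓ : (ℓ : ZMod d) ≠ 0 := by
      rw [Ne, ZMod.natCast_eq_zero_iff]
      exact Nat.not_dvd_of_pos_of_lt (by omega) (by omega)
    have hsum : inn 1 ((gM d ^ ℓ) ((gT d ^ k) 1)) = 0 := by
      simp only [inn, (isFixedPt_gT_pow_one k).eq, gM_pow_apply, Pi.one_apply, map_one, one_mul,
        mul_one]
      classical
      rw [AddChar.sum_mulShift _ (ZMod.isPrimitive_stdAddChar d), if_neg hℓ, Nat.cast_zero]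
    simp [hsum]

lemma smul_mem_bset {v : ZMod d → ℂ} (hv : v ∈ Bset d) {c : ℂ} (hc : c ≠ 0) :
    c • v ∈ Bset d :=
  let ⟨hv₀, _, _, h⟩ := hv
  ⟨smul_ne_zero hc hv₀, _, _, biangular_smul c h⟩

lemma mapsTo_gT_pow_bset (k : ℕ) : Set.MapsTo (gT d ^ k) (Bset d) (Bset d) := by
  have hT : Set.MapsTo (gT d) (Bset d) (Bset d) := fun v ⟨hv₀, _, _, h⟩ =>
    ⟨(gT d).map_ne_zero_iff.mpr hv₀, _, _, biangular_gT h⟩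
  rw [LinearEquiv.coe_pow]
  exact hT.iterate k

lemma one_mem_bset : (1 : ZMod d → ℂ) ∈ Bset d :=
  ⟨one_ne_zero, _, _, biangular_one⟩

end Gabor

lemma joinedIn_smul_of_ne_zero {E : Type*} [AddCommGroup E] [Module ℂ E] [TopologicalSpace E]
    [ContinuousSMul ℂ E] {S : Set E} (hS : ∀ v ∈ S, ∀ c : ℂ, c ≠ 0 → c • v ∈ S) {v : E}
    (hv : v ∈ S) {c : ℂ} (hc : c ≠ 0) : JoinedIn S v (c • v) := by
  have hpath : JoinedIn {0}ᶜ (1 : ℂ) c :=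
    (isPathConnected_compl_singleton_of_one_lt_rank (by simp) 0).joinedIn 1 one_ne_zero c hc
  have hcont : Continuous fun z : ℂ => z • v := by fun_prop
  have := (hpath.map hcont).mono
    (Set.image_subset_iff.mpr fun z hz => hS v hv z hz)
  rwa [one_smul] at this

theorem bset_pathConnected_of_cset_general (d : ℕ) [NeZero d]
    (h : IsPathConnected {v ∈ Bset d | v 0 = 1}) :
    IsPathConnected (Bset d) := by
  refine ⟨1, one_mem_bset, fun {v} hv => ?_⟩
  obtain ⟨j, hj⟩ : ∃ j, v j ≠ 0 := Function.ne_iff.mp hv.1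
  set u := (v j)⁻¹ • (gT d ^ (-j).val) v
  have hu : u ∈ {v ∈ Bset d | v 0 = 1} :=
    ⟨smul_mem_bset (mapsTo_gT_pow_bset _ hv) (inv_ne_zero hj), by simpa [u, gT_pow_apply] using inv_mul_cancel₀ hj⟩
  have hshift : (gT d ^ j.val) u = (v j)⁻¹ • v := by
    rw [map_smul, gT_pow_val_gT_pow_val_neg]
  have h₁ : JoinedIn (Bset d) 1 ((v j)⁻¹ • v) := by
    have := ((h.joinedIn 1 ⟨one_mem_bset, rfl⟩ u hu).mono (Set.sep_subset _ _)).map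
      (gT d ^ j.val).toLinearMap.continuous_of_finiteDimensional
    rw [LinearEquiv.coe_coe, isFixedPt_gT_pow_one, hshift] at this
    exact this.mono (mapsTo_gT_pow_bset _).image_subset
  exact h₁.trans (joinedIn_smul_of_ne_zero (fun w hw c hc => smul_mem_bset hw hc) hv
    (inv_ne_zero hj)).symm

/-- if `C_d = {v ∈ B_d : v 0 = 1}` is path-connected then so is `B_d`. -/
theorem bset_pathConnected_of_cset (d : ℕ) [NeZero d] (hd : 2 ≤ d)
    (h : IsPathConnected {v ∈ Bset d | v 0 = 1}) :
    IsPathConnected (Bset d) :=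
  bset_pathConnected_of_cset_general d h
end

section
/- There exists a SIC in ℂ²: there exists a unit-norm vector v ∈ ℂ² such that |⟨v, M^ℓ T^k v⟩|² = 1/3 for all (k,ℓ) ∈ {0,1}² with (k,ℓ) ≠ (0,0). -/
open scoped ComplexConjugate

/-! For `d = 2` the operators `M`, `T`, `MT` act as the Pauli matrices `Z`, `X`, `iY`, so for a unit
vector `v` the three overlaps `|⟨v, M^ℓ T^k v⟩|` are the absolute values of the coordinates of its
Bloch vector `(2 Re z, 2 Im z, |v₀|² - |v₁|²)`, where `z = conj v₀ · v₁`. A unit vector whose Bloch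
vector is `(1, 1, 1) / √3` is therefore a SIC. -/

open Complex

lemma sum_zmod_two {M : Type*} [AddCommMonoid M] (f : ZMod 2 → M) : ∑ j, f j = f 0 + f 1 :=
  Fin.sum_univ_two f

lemma inn_two (u w : ZMod 2 → ℂ) : inn u w = conj (u 0) * w 0 + conj (u 1) * w 1 :=
  sum_zmod_two _

lemma gT_two_apply_zero (v : ZMod 2 → ℂ) : gT 2 v 0 = v 1 := rfl

lemma gT_two_apply_one (v : ZMod 2 → ℂ) : gT 2 v 1 = v 0 := rfl

lemma gM_two_apply (v : ZMod 2 → ℂ) (j : ZMod 2) : gM 2 v j = (-1) ^ j.val * v j := by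
  have hω : exp (2 * Real.pi * I / (2 : ℕ)) = -1 := by
    rw [← exp_pi_mul_I]
    push_cast
    ring_nf
  rw [← hω]
  rfl

lemma inn_gM_two (v : ZMod 2 → ℂ) : inn v (gM 2 v) = ((‖v 0‖ ^ 2 - ‖v 1‖ ^ 2 : ℝ) : ℂ) := by
  simp only [inn_two, gM_two_apply, ZMod.val_zero, ZMod.val_one, pow_zero, pow_one, one_mul,
    neg_one_mul, mul_neg, conj_mul']
  push_cast
  ring

lemma inn_gT_two (v : ZMod 2 → ℂ) : inn v (gT 2 v) = ((2 * (conj (v 0) * v 1).re : ℝ) : ℂ) := by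
  rw [inn_two, gT_two_apply_zero, gT_two_apply_one, ← add_conj, map_mul, conj_conj, mul_comm (v 0)]

lemma inn_gM_gT_two (v : ZMod 2 → ℂ) :
    inn v (gM 2 (gT 2 v)) = ((2 * (conj (v 0) * v 1).im : ℝ) : ℂ) * I := by
  simp only [inn_two, gM_two_apply, ZMod.val_zero, ZMod.val_one, pow_zero, pow_one, one_mul,
    neg_one_mul, mul_neg, gT_two_apply_zero, gT_two_apply_one, ← sub_conj, map_mul, conj_conj]
  ring

lemma sq_norm_inn_gM_two (v : ZMod 2 → ℂ) :
    ‖inn v (gM 2 v)‖ ^ 2 = (‖v 0‖ ^ 2 - ‖v 1‖ ^ 2) ^ 2 := by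
  rw [inn_gM_two, norm_real, Real.norm_eq_abs, sq_abs]

lemma sq_norm_inn_gT_two (v : ZMod 2 → ℂ) :
    ‖inn v (gT 2 v)‖ ^ 2 = (2 * (conj (v 0) * v 1).re) ^ 2 := by
  rw [inn_gT_two, norm_real, Real.norm_eq_abs, sq_abs]

lemma sq_norm_inn_gM_gT_two (v : ZMod 2 → ℂ) :
    ‖inn v (gM 2 (gT 2 v))‖ ^ 2 = (2 * (conj (v 0) * v 1).im) ^ 2 := by
  rw [inn_gM_gT_two, norm_mul, norm_I, mul_one, norm_real, Real.norm_eq_abs, sq_abs]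

/-- The unit vector with Bloch vector `(1, 1, 1) / √3`. -/
noncomputable def sicVector : ZMod 2 → ℂ := fun j =>
  if j = 0 then √((3 + √3) / 6) else √((3 - √3) / 12) * (1 + I)

lemma sicVector_zero : sicVector 0 = √((3 + √3) / 6) := if_pos rfl

lemma sicVector_one : sicVector 1 = √((3 - √3) / 12) * (1 + I) := if_neg (by decide)

lemma sq_norm_sicVector_zero : ‖sicVector 0‖ ^ 2 = (3 + √3) / 6 := by
  rw [sicVector_zero, norm_real, Real.norm_eq_abs, sq_abs, Real.sq_sqrt (by positivity)]

lemma sq_norm_sicVector_one : ‖sicVector 1‖ ^ 2 = (3 - √3) / 6 := by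
  have h : 0 ≤ (3 - √3) / 12 := by
    nlinarith [Real.sq_sqrt (show (0 : ℝ) ≤ 3 by norm_num), Real.sqrt_nonneg 3]
  rw [sicVector_one, norm_mul, norm_real, Real.norm_eq_abs, mul_pow, sq_abs, Real.sq_sqrt h,
    Complex.sq_norm, normSq_apply]
  simp only [add_re, one_re, I_re, add_im, one_im, I_im]
  ring

lemma conj_mul_sicVector : conj (sicVector 0) * sicVector 1 = (√(1 / 12) : ℝ) * (1 + I) := by
  have h : (3 + √3) / 6 * ((3 - √3) / 12) = 1 / 12 := by
    linear_combination (-1 / 72 : ℝ) * Real.sq_sqrt (show (0 : ℝ) ≤ 3 by norm_num)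
  rw [sicVector_zero, sicVector_one, conj_ofReal, ← mul_assoc, ← ofReal_mul,
    ← Real.sqrt_mul (by positivity), h]

/-- there exists a SIC in `ℂ²`. -/
theorem sic_exists_dim_two :
    ∃ v : ZMod 2 → ℂ, (∑ j, ‖v j‖ ^ 2 = 1) ∧
      ∀ k ℓ : ℕ, k ≤ 1 → ℓ ≤ 1 → ¬(k = 0 ∧ ℓ = 0) →
        ‖inn v ((gM 2 ^ ℓ) ((gT 2 ^ k) v))‖ ^ 2 = 1 / 3 := by
  have h3 : √3 ^ 2 = 3 := Real.sq_sqrt (by norm_num)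
  have h12 : √(1 / 12) ^ 2 = 1 / 12 := Real.sq_sqrt (by norm_num)
  refine ⟨sicVector, ?_, ?_⟩
  · rw [sum_zmod_two, sq_norm_sicVector_zero, sq_norm_sicVector_one]
    ring
  rintro k ℓ hk hℓ hkℓ
  interval_cases k <;> interval_cases ℓ <;>
    simp only [pow_zero, pow_one, LinearEquiv.coe_one, id_eq]
  · exact absurd ⟨rfl, rfl⟩ hkℓ
  · rw [sq_norm_inn_gM_two, sq_norm_sicVector_zero, sq_norm_sicVector_one]
    linear_combination (1 / 9 : ℝ) * h3
  · rw [sq_norm_inn_gT_two, conj_mul_sicVector, re_ofReal_mul]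
    simp only [add_re, one_re, I_re, add_zero, mul_one]
    linear_combination 4 * h12
  · rw [sq_norm_inn_gM_gT_two, conj_mul_sicVector, im_ofReal_mul]
    simp only [add_im, one_im, I_im, zero_add, mul_one]
    linear_combination 4 * h12
end
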